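/- Let H be a separable real Hilbert space, B₁ and B₂ bounded linear operators on H, a, g₁, g₂ ∈ H, q₀ > 0, μ a finite Borel measure on H, ρ : H → ℂ Borel measurable with ∫_H ‖w‖ · k(q₀; w) · |ρ(w)| dμ(w) < ∞, and φ : H → ℂ Borel measurable with |φ(w)| ≤ 1 for all w. Let U_{q₀} = { λ ∈ ℂ : Re(λ) > 0 and |Im(λ^{−1/2})| < 1/√(2q₀) }, and let q₁, q₂ be real numbers with |q₁| > q₀ and |q₂| > q₀. Define V(λ₁, λ₂) = ∫_H φ(w) · ( i⟨B₁ w, g₁⟩ + i⟨B₂ w, g₂⟩ ) · ψ(λ₁, λ₂; w) · ρ(w) dμ(w). Then: (1) the integrand is μ-integrable for every (λ₁, λ₂) ∈ U_{q₀} × U_{q₀} and also at (−iq₁, −iq₂); (2) for each fixed λ₂ ∈ U_{q₀} the map λ₁ ↦ V(λ₁, λ₂) is complex differentiable on U_{q₀}, and symmetrically in λ₂; and (3) V(λ₁, λ₂) → V(−iq₁, −iq₂) as (λ₁, λ₂) → (−iq₁, −iq₂) through points with Re(λ₁) > 0 and Re(λ₂) > 0. -/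

import Mathlib

open MeasureTheory
open scoped RealInnerProductSpace

/-- The function `ψ(λ₁, λ₂; w)` of equation (3.8) of the paper, with `Bⱼ` playing
the role of `Aⱼ^{1/2}`. -/
noncomputable def psi {H : Type*} [NormedAddCommGroup H] [InnerProductSpace ℝ H]
    (B₁ B₂ : H →L[ℝ] H) (a : H) (l₁ l₂ : ℂ) (w : H) : ℂ :=
  Complex.exp
    ((-((‖B₁ w‖ : ℂ) ^ 2) / (2 * l₁)
        + Complex.I * l₁ ^ (-(1 : ℂ) / 2) * ((⟪B₁ w, a⟫ : ℝ) : ℂ))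
      + (-((‖B₂ w‖ : ℂ) ^ 2) / (2 * l₂)
        + Complex.I * l₂ ^ (-(1 : ℂ) / 2) * ((⟪B₂ w, a⟫ : ℝ) : ℂ)))

/-- The dominating function `k(q₀; w)` of equation (3.10) of the paper. -/
noncomputable def kfun {H : Type*} [NormedAddCommGroup H] [InnerProductSpace ℝ H]
    (B₁ B₂ : H →L[ℝ] H) (a : H) (q₀ : ℝ) (w : H) : ℝ :=
  Real.exp ((2 * q₀) ^ (-(1 : ℝ) / 2) * ‖B₁‖ * ‖w‖ * ‖a‖
    + (2 * q₀) ^ (-(1 : ℝ) / 2) * ‖B₂‖ * ‖w‖ * ‖a‖)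

/-!
On the region `0 ≤ Re λ`, `|Im λ^{-1/2}| ≤ (2q₀)^{-1/2}` the Gaussian part of each exponent of `ψ`
has nonpositive real part and, by Cauchy–Schwarz, the linear part has real part at most
`(2q₀)^{-1/2} ‖Bⱼ‖ ‖w‖ ‖a‖`; hence `|ψ| ≤ k(q₀; ·)`. As `|φ (i⟨B₁w, g₁⟩ + i⟨B₂w, g₂⟩) ρ|` is at
most a constant times `‖w‖ |ρ|`, this one bound dominates the integrand uniformly in `(λ₁, λ₂)`.
It gives integrability at once, analyticity because Cauchy's estimate turns it into a bound on
the `λ`-derivatives, and the boundary limit by dominated convergence, since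
`|Im (-iq)^{-1/2}| = 1/√(2|q|) < 1/√(2q₀)` for `|q| > q₀`.
-/

open Filter Topology Metric

section ParametricIntegral

variable {α : Type*} [MeasurableSpace α] {μ : Measure α} {E : Type*} [NormedAddCommGroup E]

theorem aestronglyMeasurable_deriv_of_differentiableAt {𝕜 : Type*} [NontriviallyNormedField 𝕜]
    [NormedSpace 𝕜 E] {F : 𝕜 → α → E} {x₀ : 𝕜}
    (hF_meas : ∀ᶠ x in 𝓝 x₀, AEStronglyMeasurable (F x) μ)
    (h_diff : ∀ᵐ a ∂μ, DifferentiableAt 𝕜 (F · a) x₀) :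
    AEStronglyMeasurable (fun a => deriv (F · a) x₀) μ := by
  obtain ⟨u, hu⟩ := exists_seq_tendsto (𝓝[≠] x₀)
  obtain ⟨N, hN⟩ := eventually_atTop.1 ((hu.mono_right nhdsWithin_le_nhds).eventually hF_meas)
  refine aestronglyMeasurable_of_tendsto_ae atTop
    (f := fun n a => slope (F · a) x₀ (u (n + N))) (fun n => ?_) ?_
  · exact ((hN _ le_add_self).sub hF_meas.self_of_nhds).const_smul _
  · filter_upwards [h_diff] with a ha
    exact ha.hasDerivAt.tendsto_slope.comp (hu.comp (tendsto_add_atTop_nat N))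

theorem Complex.differentiableAt_integral_of_dominated [NormedSpace ℂ E] {F : ℂ → α → E}
    {z₀ : ℂ} {s : Set ℂ} {bound : α → ℝ} (hs : s ∈ 𝓝 z₀)
    (hF_meas : ∀ᶠ z in 𝓝 z₀, AEStronglyMeasurable (F z) μ)
    (h_diff : ∀ᵐ a ∂μ, DifferentiableOn ℂ (F · a) s)
    (h_bound : ∀ᵐ a ∂μ, ∀ z ∈ s, ‖F z a‖ ≤ bound a) (bound_integrable : Integrable bound μ) :
    DifferentiableAt ℂ (fun z => ∫ a, F z a ∂μ) z₀ := by
  obtain ⟨ε, hε, hball⟩ := Metric.mem_nhds_iff.1 hs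
  have hsub : ∀ z ∈ ball z₀ (ε / 2), closedBall z (ε / 4) ⊆ s := fun z hz =>
    (closedBall_subset_ball' (by rw [mem_ball] at hz; linarith)).trans hball
  have h_diffAt : ∀ᵐ a ∂μ, ∀ z ∈ ball z₀ (ε / 2), DifferentiableAt ℂ (F · a) z := by
    filter_upwards [h_diff] with a ha z hz
    exact ha.differentiableAt (mem_of_superset (closedBall_mem_nhds z (by positivity))
      (hsub z hz))
  have hF_int : Integrable (F z₀) μ := bound_integrable.mono' hF_meas.self_of_nhds
    (h_bound.mono fun a ha => ha z₀ (mem_of_mem_nhds hs))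
  have h_deriv_le : ∀ᵐ a ∂μ, ∀ z ∈ ball z₀ (ε / 2), ‖deriv (F · a) z‖ ≤ bound a / (ε / 4) := by
    filter_upwards [h_diff, h_bound] with a ha hb z hz
    exact norm_deriv_le_of_forall_mem_sphere_norm_le (by positivity)
      (ha.diffContOnCl_ball (hsub z hz))
      fun ζ hζ => hb ζ (hsub z hz (sphere_subset_closedBall hζ))
  exact (hasDerivAt_integral_of_dominated_loc_of_deriv_le (ball_mem_nhds z₀ (by positivity))
    hF_meas hF_int (aestronglyMeasurable_deriv_of_differentiableAt hF_meas
      (h_diffAt.mono fun a ha => ha z₀ (mem_ball_self (by positivity))))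
    h_deriv_le (bound_integrable.div_const _)
    (h_diffAt.mono fun a ha z hz => (ha z hz).hasDerivAt)).2.differentiableAt

end ParametricIntegral

theorem abs_im_cpow_neg_half {l : ℂ} (hl : l ≠ 0) :
    |(l ^ (-(1 : ℂ) / 2)).im| = |Real.sin (l.arg / 2)| / √‖l‖ := by
  have hre : (Complex.log l * (-(1 : ℂ) / 2)).re = -(Real.log ‖l‖ / 2) := by
    simp [Complex.mul_re, Complex.log_re]; ring
  have him : (Complex.log l * (-(1 : ℂ) / 2)).im = -(l.arg / 2) := by
    simp [Complex.mul_im, Complex.log_im]; ring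
  rw [Complex.cpow_def_of_ne_zero hl, Complex.exp_im, hre, him, Real.exp_neg, Real.exp_half,
    Real.exp_log (norm_pos_iff.2 hl), Real.sin_neg, abs_mul, abs_neg, abs_inv,
    abs_of_nonneg (Real.sqrt_nonneg _), inv_mul_eq_div]

theorem abs_im_cpow_neg_half_neg_I_mul {q : ℝ} (hq : q ≠ 0) :
    |((-Complex.I * q) ^ (-(1 : ℂ) / 2)).im| = 1 / √(2 * |q|) := by
  have hsin : |Real.sin ((-Complex.I * q).arg / 2)| = |Real.sin (Real.pi / 4)| := by
    have hquarter : Real.pi / 2 / 2 = Real.pi / 4 := by ring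
    rcases hq.lt_or_gt with hq | hq
    · rw [Complex.arg_eq_pi_div_two_iff.2 (by simpa using hq), hquarter]
    · rw [Complex.arg_eq_neg_pi_div_two_iff.2 (by simpa using hq), neg_div, Real.sin_neg,
        abs_neg, hquarter]
  have hnorm : ‖-Complex.I * q‖ = |q| := by simp
  have hq' : 0 < |q| := abs_pos.2 hq
  rw [abs_im_cpow_neg_half (by simpa using hq), hsin, Real.sin_pi_div_four,
    abs_of_pos (by positivity), hnorm, Real.sqrt_mul zero_le_two]
  field_simp
  rw [Real.sq_sqrt zero_le_two]

theorem one_div_sqrt_eq_rpow_neg_half {x : ℝ} (hx : 0 ≤ x) : 1 / √x = x ^ (-(1 : ℝ) / 2) := by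
  rw [neg_div, Real.rpow_neg hx, Real.sqrt_eq_rpow, one_div]

theorem abs_im_cpow_neg_half_neg_I_mul_lt {q₀ q : ℝ} (hq₀ : 0 < q₀) (hq : q₀ < |q|) :
    |((-Complex.I * q) ^ (-(1 : ℂ) / 2)).im| < (2 * q₀) ^ (-(1 : ℝ) / 2) := by
  rw [abs_im_cpow_neg_half_neg_I_mul (abs_pos.1 (hq₀.trans hq)),
    ← one_div_sqrt_eq_rpow_neg_half (by positivity)]
  exact one_div_lt_one_div_of_lt (by positivity) (Real.sqrt_lt_sqrt (by positivity) (by linarith))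

theorem neg_I_mul_mem_slitPlane {q : ℝ} (hq : q ≠ 0) : -Complex.I * q ∈ Complex.slitPlane :=
  Complex.mem_slitPlane_iff.2 (Or.inr (by simpa using hq))

theorem eventually_abs_im_cpow_lt {l : ℂ} (hl : l ∈ Complex.slitPlane) {c : ℝ}
    (h : |(l ^ (-(1 : ℂ) / 2)).im| < c) : ∀ᶠ z in 𝓝 l, |(z ^ (-(1 : ℂ) / 2)).im| < c :=
  (Complex.continuous_im.continuousAt.comp (continuousAt_cpow_const hl)).abs.eventually_lt_const h

section Psi

variable {H : Type*} [NormedAddCommGroup H] [InnerProductSpace ℝ H]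

noncomputable def psiExponent (B : H →L[ℝ] H) (a : H) (l : ℂ) (w : H) : ℂ :=
  -((‖B w‖ : ℂ) ^ 2) / (2 * l) + Complex.I * l ^ (-(1 : ℂ) / 2) * ((⟪B w, a⟫ : ℝ) : ℂ)

theorem psi_eq_exp (B₁ B₂ : H →L[ℝ] H) (a : H) (l₁ l₂ : ℂ) (w : H) :
    psi B₁ B₂ a l₁ l₂ w = Complex.exp (psiExponent B₁ a l₁ w + psiExponent B₂ a l₂ w) := rfl

theorem psi_comm (B₁ B₂ : H →L[ℝ] H) (a : H) (l₁ l₂ : ℂ) (w : H) :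
    psi B₁ B₂ a l₁ l₂ w = psi B₂ B₁ a l₂ l₁ w := by
  rw [psi_eq_exp, psi_eq_exp, add_comm]

theorem kfun_comm (B₁ B₂ : H →L[ℝ] H) (a : H) (q₀ : ℝ) (w : H) :
    kfun B₁ B₂ a q₀ w = kfun B₂ B₁ a q₀ w := by
  rw [kfun, kfun, add_comm]

theorem abs_inner_apply_le (B : H →L[ℝ] H) (a w : H) : |⟪B w, a⟫| ≤ ‖B‖ * ‖w‖ * ‖a‖ :=
  (abs_real_inner_le_norm _ _).trans (by gcongr; exact B.le_opNorm w)

theorem re_psiExponent_le (B : H →L[ℝ] H) (a : H) {l : ℂ} (hl : 0 ≤ l.re) (w : H) :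
    (psiExponent B a l w).re ≤ |(l ^ (-(1 : ℂ) / 2)).im| * (‖B‖ * ‖w‖ * ‖a‖) := by
  have hquad : (-((‖B w‖ : ℂ) ^ 2) / (2 * l)).re ≤ 0 := by
    rw [neg_div, div_eq_mul_inv, ← Complex.ofReal_pow, Complex.neg_re, Complex.re_ofReal_mul,
      Complex.inv_re, neg_nonpos]
    exact mul_nonneg (sq_nonneg _) (div_nonneg (by simpa using hl) (Complex.normSq_nonneg _))
  have hlin : (Complex.I * l ^ (-(1 : ℂ) / 2) * ((⟪B w, a⟫ : ℝ) : ℂ)).re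
      ≤ |(l ^ (-(1 : ℂ) / 2)).im| * |⟪B w, a⟫| := by
    simpa [Complex.mul_re, abs_mul] using le_abs_self (-(l ^ (-(1 : ℂ) / 2)).im * ⟪B w, a⟫)
  rw [psiExponent, Complex.add_re]
  linarith [mul_le_mul_of_nonneg_left (abs_inner_apply_le B a w)
    (abs_nonneg (l ^ (-(1 : ℂ) / 2)).im)]

theorem norm_psi_le_kfun (B₁ B₂ : H →L[ℝ] H) (a : H) (q₀ : ℝ) {l₁ l₂ : ℂ}
    (h₁re : 0 ≤ l₁.re) (h₁im : |(l₁ ^ (-(1 : ℂ) / 2)).im| ≤ (2 * q₀) ^ (-(1 : ℝ) / 2))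
    (h₂re : 0 ≤ l₂.re) (h₂im : |(l₂ ^ (-(1 : ℂ) / 2)).im| ≤ (2 * q₀) ^ (-(1 : ℝ) / 2)) (w : H) :
    ‖psi B₁ B₂ a l₁ l₂ w‖ ≤ kfun B₁ B₂ a q₀ w := by
  rw [psi_eq_exp, Complex.norm_exp, kfun, Real.exp_le_exp, Complex.add_re]
  have h₁ := (re_psiExponent_le B₁ a h₁re w).trans
    (mul_le_mul_of_nonneg_right h₁im (by positivity))
  have h₂ := (re_psiExponent_le B₂ a h₂re w).trans
    (mul_le_mul_of_nonneg_right h₂im (by positivity))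
  linarith

theorem continuous_psi (B₁ B₂ : H →L[ℝ] H) (a : H) (l₁ l₂ : ℂ) :
    Continuous (psi B₁ B₂ a l₁ l₂) := by
  unfold psi
  fun_prop

theorem differentiableAt_psi_left (B₁ B₂ : H →L[ℝ] H) (a : H) (l₂ : ℂ) (w : H) {z : ℂ}
    (hz : z ∈ Complex.slitPlane) : DifferentiableAt ℂ (fun z => psi B₁ B₂ a z l₂ w) z := by
  have hz0 : 2 * z ≠ 0 := mul_ne_zero two_ne_zero (Complex.slitPlane_ne_zero hz)
  unfold psi
  fun_prop (disch := assumption)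

theorem continuousAt_psi (B₁ B₂ : H →L[ℝ] H) (a : H) (w : H) {l₁ l₂ : ℂ}
    (h₁ : l₁ ∈ Complex.slitPlane) (h₂ : l₂ ∈ Complex.slitPlane) :
    ContinuousAt (fun p : ℂ × ℂ => psi B₁ B₂ a p.1 p.2 w) (l₁, l₂) := by
  have h₁0 : 2 * l₁ ≠ 0 := mul_ne_zero two_ne_zero (Complex.slitPlane_ne_zero h₁)
  have h₂0 : 2 * l₂ ≠ 0 := mul_ne_zero two_ne_zero (Complex.slitPlane_ne_zero h₂)
  unfold psi
  fun_prop (disch := assumption)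

theorem norm_mul_psi_le (B₁ B₂ : H →L[ℝ] H) (a : H) (q₀ : ℝ) (G : H → ℂ) {l₁ l₂ : ℂ}
    (h₁re : 0 ≤ l₁.re) (h₁im : |(l₁ ^ (-(1 : ℂ) / 2)).im| ≤ (2 * q₀) ^ (-(1 : ℝ) / 2))
    (h₂re : 0 ≤ l₂.re) (h₂im : |(l₂ ^ (-(1 : ℂ) / 2)).im| ≤ (2 * q₀) ^ (-(1 : ℝ) / 2)) (w : H) :
    ‖G w * psi B₁ B₂ a l₁ l₂ w‖ ≤ ‖G w‖ * kfun B₁ B₂ a q₀ w := by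
  rw [norm_mul]
  exact mul_le_mul_of_nonneg_left (norm_psi_le_kfun B₁ B₂ a q₀ h₁re h₁im h₂re h₂im w)
    (norm_nonneg _)

theorem norm_I_mul_inner_add_le (B₁ B₂ : H →L[ℝ] H) (g₁ g₂ w : H) :
    ‖Complex.I * ((⟪B₁ w, g₁⟫ : ℝ) : ℂ) + Complex.I * ((⟪B₂ w, g₂⟫ : ℝ) : ℂ)‖
      ≤ (‖B₁‖ * ‖g₁‖ + ‖B₂‖ * ‖g₂‖) * ‖w‖ := by
  refine (norm_add_le _ _).trans ?_
  simp only [norm_mul, Complex.norm_I, one_mul, Complex.norm_real, Real.norm_eq_abs]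
  linarith [abs_inner_apply_le B₁ g₁ w, abs_inner_apply_le B₂ g₂ w]

end Psi

section Integral

variable {H : Type*} [NormedAddCommGroup H] [InnerProductSpace ℝ H] [MeasurableSpace H]
  [OpensMeasurableSpace H] {μ : Measure H} (B₁ B₂ : H →L[ℝ] H) (a : H) (q₀ : ℝ) {G : H → ℂ}

theorem aestronglyMeasurable_mul_psi (hG_meas : AEStronglyMeasurable G μ) (l₁ l₂ : ℂ) :
    AEStronglyMeasurable (fun w => G w * psi B₁ B₂ a l₁ l₂ w) μ :=
  hG_meas.mul (continuous_psi B₁ B₂ a l₁ l₂).aestronglyMeasurable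

theorem integrable_mul_psi (hG_meas : AEStronglyMeasurable G μ)
    (hG : Integrable (fun w => ‖G w‖ * kfun B₁ B₂ a q₀ w) μ) {l₁ l₂ : ℂ}
    (h₁re : 0 ≤ l₁.re) (h₁im : |(l₁ ^ (-(1 : ℂ) / 2)).im| ≤ (2 * q₀) ^ (-(1 : ℝ) / 2))
    (h₂re : 0 ≤ l₂.re) (h₂im : |(l₂ ^ (-(1 : ℂ) / 2)).im| ≤ (2 * q₀) ^ (-(1 : ℝ) / 2)) :
    Integrable (fun w => G w * psi B₁ B₂ a l₁ l₂ w) μ :=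
  hG.mono' (aestronglyMeasurable_mul_psi B₁ B₂ a hG_meas l₁ l₂)
    (ae_of_all _ (norm_mul_psi_le B₁ B₂ a q₀ G h₁re h₁im h₂re h₂im))

theorem differentiableAt_integral_mul_psi_left (hG_meas : AEStronglyMeasurable G μ)
    (hG : Integrable (fun w => ‖G w‖ * kfun B₁ B₂ a q₀ w) μ) {l₁ l₂ : ℂ}
    (h₁re : 0 < l₁.re) (h₁im : |(l₁ ^ (-(1 : ℂ) / 2)).im| < (2 * q₀) ^ (-(1 : ℝ) / 2))
    (h₂re : 0 ≤ l₂.re) (h₂im : |(l₂ ^ (-(1 : ℂ) / 2)).im| ≤ (2 * q₀) ^ (-(1 : ℝ) / 2)) :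
    DifferentiableAt ℂ (fun z => ∫ w, G w * psi B₁ B₂ a z l₂ w ∂μ) l₁ := by
  set s : Set ℂ := {z | 0 < z.re ∧ |(z ^ (-(1 : ℂ) / 2)).im| < (2 * q₀) ^ (-(1 : ℝ) / 2)}
  have hs : s ∈ 𝓝 l₁ :=
    (Complex.continuous_re.continuousAt.eventually_const_lt h₁re).and
      (eventually_abs_im_cpow_lt (Complex.mem_slitPlane_iff.2 (Or.inl h₁re)) h₁im)
  refine Complex.differentiableAt_integral_of_dominated hs
    (Eventually.of_forall fun z => aestronglyMeasurable_mul_psi B₁ B₂ a hG_meas z l₂)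
    (ae_of_all _ fun w z hz => ?_) (ae_of_all _ fun w z hz => ?_) hG
  · exact (differentiableAt_const _).mul
      (differentiableAt_psi_left B₁ B₂ a l₂ w (Complex.mem_slitPlane_iff.2 (Or.inl hz.1)))
      |>.differentiableWithinAt
  · exact norm_mul_psi_le B₁ B₂ a q₀ G hz.1.le hz.2.le h₂re h₂im w

theorem differentiableAt_integral_mul_psi_right (hG_meas : AEStronglyMeasurable G μ)
    (hG : Integrable (fun w => ‖G w‖ * kfun B₁ B₂ a q₀ w) μ) {l₁ l₂ : ℂ}
    (h₁re : 0 ≤ l₁.re) (h₁im : |(l₁ ^ (-(1 : ℂ) / 2)).im| ≤ (2 * q₀) ^ (-(1 : ℝ) / 2))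
    (h₂re : 0 < l₂.re) (h₂im : |(l₂ ^ (-(1 : ℂ) / 2)).im| < (2 * q₀) ^ (-(1 : ℝ) / 2)) :
    DifferentiableAt ℂ (fun z => ∫ w, G w * psi B₁ B₂ a l₁ z w ∂μ) l₂ := by
  simp_rw [psi_comm B₁ B₂]
  simp_rw [kfun_comm B₁ B₂] at hG
  exact differentiableAt_integral_mul_psi_left B₂ B₁ a q₀ hG_meas hG h₂re h₂im h₁re h₁im

theorem continuousWithinAt_integral_mul_psi (hG_meas : AEStronglyMeasurable G μ)
    (hG : Integrable (fun w => ‖G w‖ * kfun B₁ B₂ a q₀ w) μ) {l₁ l₂ : ℂ}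
    (h₁ : l₁ ∈ Complex.slitPlane) (h₁im : |(l₁ ^ (-(1 : ℂ) / 2)).im| < (2 * q₀) ^ (-(1 : ℝ) / 2))
    (h₂ : l₂ ∈ Complex.slitPlane) (h₂im : |(l₂ ^ (-(1 : ℂ) / 2)).im| < (2 * q₀) ^ (-(1 : ℝ) / 2)) :
    ContinuousWithinAt (fun p : ℂ × ℂ => ∫ w, G w * psi B₁ B₂ a p.1 p.2 w ∂μ)
      {p | 0 ≤ p.1.re ∧ 0 ≤ p.2.re} (l₁, l₂) := by
  have him : ∀ᶠ p : ℂ × ℂ in 𝓝 (l₁, l₂),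
      |(p.1 ^ (-(1 : ℂ) / 2)).im| < (2 * q₀) ^ (-(1 : ℝ) / 2) ∧
      |(p.2 ^ (-(1 : ℂ) / 2)).im| < (2 * q₀) ^ (-(1 : ℝ) / 2) :=
    ((continuous_fst.tendsto (l₁, l₂)).eventually (eventually_abs_im_cpow_lt h₁ h₁im)).and
      ((continuous_snd.tendsto (l₁, l₂)).eventually (eventually_abs_im_cpow_lt h₂ h₂im))
  refine tendsto_integral_filter_of_dominated_convergence _
    (Eventually.of_forall fun p => aestronglyMeasurable_mul_psi B₁ B₂ a hG_meas p.1 p.2) ?_ hG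
    (ae_of_all _ fun w => ((continuousAt_const.mul
      (continuousAt_psi B₁ B₂ a w h₁ h₂)).tendsto.mono_left nhdsWithin_le_nhds))
  filter_upwards [self_mem_nhdsWithin, nhdsWithin_le_nhds him] with p hre him
  exact ae_of_all _ (norm_mul_psi_le B₁ B₂ a q₀ G hre.1 him.1.le hre.2 him.2.le)

end Integral

section Weight

variable {H : Type*} [NormedAddCommGroup H] [InnerProductSpace ℝ H]
  (B₁ B₂ : H →L[ℝ] H) (g₁ g₂ : H) (φ ρ : H → ℂ)

noncomputable def firstVariationWeight (w : H) : ℂ :=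
  φ w * (Complex.I * ((⟪B₁ w, g₁⟫ : ℝ) : ℂ) + Complex.I * ((⟪B₂ w, g₂⟫ : ℝ) : ℂ)) * ρ w

theorem measurable_firstVariationWeight [MeasurableSpace H] [OpensMeasurableSpace H]
    (hφ : Measurable φ) (hρ : Measurable ρ) :
    Measurable (firstVariationWeight B₁ B₂ g₁ g₂ φ ρ) :=
  (hφ.mul (by fun_prop : Continuous fun w =>
    Complex.I * ((⟪B₁ w, g₁⟫ : ℝ) : ℂ) + Complex.I * ((⟪B₂ w, g₂⟫ : ℝ) : ℂ)).measurable).mul hρ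

theorem integrable_norm_firstVariationWeight_mul_kfun [MeasurableSpace H]
    [OpensMeasurableSpace H] {μ : Measure H} (a : H) (q₀ : ℝ) (hφm : Measurable φ)
    (hφ : ∀ w, ‖φ w‖ ≤ 1) (hρ : Measurable ρ)
    (hk : Integrable (fun w => ‖w‖ * kfun B₁ B₂ a q₀ w * ‖ρ w‖) μ) :
    Integrable (fun w => ‖firstVariationWeight B₁ B₂ g₁ g₂ φ ρ w‖ * kfun B₁ B₂ a q₀ w) μ := by
  refine (hk.const_mul (‖B₁‖ * ‖g₁‖ + ‖B₂‖ * ‖g₂‖)).mono'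
    ((measurable_firstVariationWeight B₁ B₂ g₁ g₂ φ ρ hφm hρ).norm.aestronglyMeasurable.mul
      (Continuous.aestronglyMeasurable (by unfold kfun; fun_prop))) (ae_of_all _ fun w => ?_)
  have hk_pos : 0 < kfun B₁ B₂ a q₀ w := Real.exp_pos _
  rw [Real.norm_of_nonneg (by positivity)]
  calc ‖firstVariationWeight B₁ B₂ g₁ g₂ φ ρ w‖ * kfun B₁ B₂ a q₀ w
      ≤ 1 * ((‖B₁‖ * ‖g₁‖ + ‖B₂‖ * ‖g₂‖) * ‖w‖) * ‖ρ w‖ * kfun B₁ B₂ a q₀ w := by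
        rw [firstVariationWeight, norm_mul, norm_mul]
        gcongr
        exacts [hφ w, norm_I_mul_inner_add_le B₁ B₂ g₁ g₂ w]
    _ = (‖B₁‖ * ‖g₁‖ + ‖B₂‖ * ‖g₂‖) * (‖w‖ * kfun B₁ B₂ a q₀ w * ‖ρ w‖) := by ring

end Weight

theorem stmt16_general {H : Type*} [NormedAddCommGroup H] [InnerProductSpace ℝ H]
    [MeasurableSpace H] [BorelSpace H]
    (B₁ B₂ : H →L[ℝ] H) (a g₁ g₂ : H) (q₀ : ℝ) (hq₀ : 0 < q₀)
    (μ : Measure H)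
    (ρ : H → ℂ) (hρ : Measurable ρ)
    (hk : Integrable (fun w => ‖w‖ * kfun B₁ B₂ a q₀ w * ‖ρ w‖) μ)
    (φ : H → ℂ) (hφm : Measurable φ) (hφ : ∀ w, ‖φ w‖ ≤ 1)
    (U : Set ℂ)
    (hU : U = {l : ℂ | 0 < l.re ∧ |(l ^ (-(1 : ℂ) / 2)).im| < 1 / Real.sqrt (2 * q₀)})
    (q₁ q₂ : ℝ) (hq₁ : q₀ < |q₁|) (hq₂ : q₀ < |q₂|) :
    (∀ l₁ ∈ U, ∀ l₂ ∈ U,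
      Integrable (fun w =>
        φ w * (Complex.I * ((⟪B₁ w, g₁⟫ : ℝ) : ℂ) + Complex.I * ((⟪B₂ w, g₂⟫ : ℝ) : ℂ))
          * psi B₁ B₂ a l₁ l₂ w * ρ w) μ) ∧
    Integrable (fun w =>
      φ w * (Complex.I * ((⟪B₁ w, g₁⟫ : ℝ) : ℂ) + Complex.I * ((⟪B₂ w, g₂⟫ : ℝ) : ℂ))
        * psi B₁ B₂ a (-Complex.I * q₁) (-Complex.I * q₂) w * ρ w) μ ∧
    (∀ l₂ ∈ U, ∀ l₁ ∈ U,
      DifferentiableAt ℂ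
        (fun z => ∫ w,
          φ w * (Complex.I * ((⟪B₁ w, g₁⟫ : ℝ) : ℂ) + Complex.I * ((⟪B₂ w, g₂⟫ : ℝ) : ℂ))
            * psi B₁ B₂ a z l₂ w * ρ w ∂μ) l₁) ∧
    (∀ l₁ ∈ U, ∀ l₂ ∈ U,
      DifferentiableAt ℂ
        (fun z => ∫ w,
          φ w * (Complex.I * ((⟪B₁ w, g₁⟫ : ℝ) : ℂ) + Complex.I * ((⟪B₂ w, g₂⟫ : ℝ) : ℂ))
            * psi B₁ B₂ a l₁ z w * ρ w ∂μ) l₂) ∧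
    Filter.Tendsto
      (fun p : ℂ × ℂ => ∫ w,
        φ w * (Complex.I * ((⟪B₁ w, g₁⟫ : ℝ) : ℂ) + Complex.I * ((⟪B₂ w, g₂⟫ : ℝ) : ℂ))
          * psi B₁ B₂ a p.1 p.2 w * ρ w ∂μ)
      (nhdsWithin (-Complex.I * q₁, -Complex.I * q₂)
        {p : ℂ × ℂ | 0 < p.1.re ∧ 0 < p.2.re})
      (nhds (∫ w,
        φ w * (Complex.I * ((⟪B₁ w, g₁⟫ : ℝ) : ℂ) + Complex.I * ((⟪B₂ w, g₂⟫ : ℝ) : ℂ))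
          * psi B₁ B₂ a (-Complex.I * q₁) (-Complex.I * q₂) w * ρ w ∂μ)) := by
  have hU' : ∀ l ∈ U, 0 < l.re ∧ |(l ^ (-(1 : ℂ) / 2)).im| < (2 * q₀) ^ (-(1 : ℝ) / 2) := by
    rw [hU, one_div_sqrt_eq_rpow_neg_half (by positivity)]
    exact fun l hl => hl
  have hb₁ := abs_im_cpow_neg_half_neg_I_mul_lt hq₀ hq₁
  have hb₂ := abs_im_cpow_neg_half_neg_I_mul_lt hq₀ hq₂
  have hG_meas :=
    (measurable_firstVariationWeight B₁ B₂ g₁ g₂ φ ρ hφm hρ).aestronglyMeasurable (μ := μ)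
  have hG := integrable_norm_firstVariationWeight_mul_kfun B₁ B₂ g₁ g₂ φ ρ a q₀ hφm hφ hρ hk
  have hrw : ∀ l₁ l₂ w, φ w * (Complex.I * ((⟪B₁ w, g₁⟫ : ℝ) : ℂ)
      + Complex.I * ((⟪B₂ w, g₂⟫ : ℝ) : ℂ)) * psi B₁ B₂ a l₁ l₂ w * ρ w
      = firstVariationWeight B₁ B₂ g₁ g₂ φ ρ w * psi B₁ B₂ a l₁ l₂ w :=
    fun _ _ _ => mul_right_comm _ _ _
  simp only [hrw]
  refine ⟨fun l₁ hl₁ l₂ hl₂ => ?_, ?_, fun l₂ hl₂ l₁ hl₁ => ?_, fun l₁ hl₁ l₂ hl₂ => ?_, ?_⟩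
  · exact integrable_mul_psi B₁ B₂ a q₀ hG_meas hG (hU' l₁ hl₁).1.le (hU' l₁ hl₁).2.le
      (hU' l₂ hl₂).1.le (hU' l₂ hl₂).2.le
  · exact integrable_mul_psi B₁ B₂ a q₀ hG_meas hG (by simp) hb₁.le (by simp) hb₂.le
  · exact differentiableAt_integral_mul_psi_left B₁ B₂ a q₀ hG_meas hG (hU' l₁ hl₁).1
      (hU' l₁ hl₁).2 (hU' l₂ hl₂).1.le (hU' l₂ hl₂).2.le
  · exact differentiableAt_integral_mul_psi_right B₁ B₂ a q₀ hG_meas hG (hU' l₁ hl₁).1.le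
      (hU' l₁ hl₁).2.le (hU' l₂ hl₂).1 (hU' l₂ hl₂).2
  · exact (continuousWithinAt_integral_mul_psi B₁ B₂ a q₀ hG_meas hG
      (neg_I_mul_mem_slitPlane (abs_pos.1 (hq₀.trans hq₁))) hb₁
      (neg_I_mul_mem_slitPlane (abs_pos.1 (hq₀.trans hq₂))) hb₂).mono
      fun p hp => ⟨hp.1.le, hp.2.le⟩

/-- The analytic core of Theorem 5.1 of the paper, for the transform
`V(λ₁, λ₂) = ∫_H φ(w)(i⟨B₁w,g₁⟩ + i⟨B₂w,g₂⟩) ψ(λ₁,λ₂;w) ρ(w) dμ(w)` of the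
first variation: integrability on `U_{q₀} × U_{q₀}` and at `(−iq₁, −iq₂)`,
separate analyticity, and the boundary limit. -/
theorem stmt16 {H : Type*} [NormedAddCommGroup H] [InnerProductSpace ℝ H]
    [TopologicalSpace.SeparableSpace H] [MeasurableSpace H] [BorelSpace H]
    (B₁ B₂ : H →L[ℝ] H) (a g₁ g₂ : H) (q₀ : ℝ) (hq₀ : 0 < q₀)
    (μ : Measure H) [IsFiniteMeasure μ]
    (ρ : H → ℂ) (hρ : Measurable ρ)
    (hk : Integrable (fun w => ‖w‖ * kfun B₁ B₂ a q₀ w * ‖ρ w‖) μ)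
    (φ : H → ℂ) (hφm : Measurable φ) (hφ : ∀ w, ‖φ w‖ ≤ 1)
    (U : Set ℂ)
    (hU : U = {l : ℂ | 0 < l.re ∧ |(l ^ (-(1 : ℂ) / 2)).im| < 1 / Real.sqrt (2 * q₀)})
    (q₁ q₂ : ℝ) (hq₁ : q₀ < |q₁|) (hq₂ : q₀ < |q₂|) :
    (∀ l₁ ∈ U, ∀ l₂ ∈ U,
      Integrable (fun w =>
        φ w * (Complex.I * ((⟪B₁ w, g₁⟫ : ℝ) : ℂ) + Complex.I * ((⟪B₂ w, g₂⟫ : ℝ) : ℂ))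
          * psi B₁ B₂ a l₁ l₂ w * ρ w) μ) ∧
    Integrable (fun w =>
      φ w * (Complex.I * ((⟪B₁ w, g₁⟫ : ℝ) : ℂ) + Complex.I * ((⟪B₂ w, g₂⟫ : ℝ) : ℂ))
        * psi B₁ B₂ a (-Complex.I * q₁) (-Complex.I * q₂) w * ρ w) μ ∧
    (∀ l₂ ∈ U, ∀ l₁ ∈ U,
      DifferentiableAt ℂ
        (fun z => ∫ w,
          φ w * (Complex.I * ((⟪B₁ w, g₁⟫ : ℝ) : ℂ) + Complex.I * ((⟪B₂ w, g₂⟫ : ℝ) : ℂ))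
            * psi B₁ B₂ a z l₂ w * ρ w ∂μ) l₁) ∧
    (∀ l₁ ∈ U, ∀ l₂ ∈ U,
      DifferentiableAt ℂ
        (fun z => ∫ w,
          φ w * (Complex.I * ((⟪B₁ w, g₁⟫ : ℝ) : ℂ) + Complex.I * ((⟪B₂ w, g₂⟫ : ℝ) : ℂ))
            * psi B₁ B₂ a l₁ z w * ρ w ∂μ) l₂) ∧
    Filter.Tendsto
      (fun p : ℂ × ℂ => ∫ w,
        φ w * (Complex.I * ((⟪B₁ w, g₁⟫ : ℝ) : ℂ) + Complex.I * ((⟪B₂ w, g₂⟫ : ℝ) : ℂ))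
          * psi B₁ B₂ a p.1 p.2 w * ρ w ∂μ)
      (nhdsWithin (-Complex.I * q₁, -Complex.I * q₂)
        {p : ℂ × ℂ | 0 < p.1.re ∧ 0 < p.2.re})
      (nhds (∫ w,
        φ w * (Complex.I * ((⟪B₁ w, g₁⟫ : ℝ) : ℂ) + Complex.I * ((⟪B₂ w, g₂⟫ : ℝ) : ℂ))
          * psi B₁ B₂ a (-Complex.I * q₁) (-Complex.I * q₂) w * ρ w ∂μ)) :=
  stmt16_general B₁ B₂ a g₁ g₂ q₀ hq₀ μ ρ hρ hk φ hφm hφ U hU q₁ q₂ hq₁ hq₂
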